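/- Let V be a vector space over a field F and let t, s, r ∈ F with t and r nonzero and s² = (1 − t r) s. Then the map B : V × V → V × V defined by B(x,y) = (t y + s x, r x) satisfies the set-theoretic Yang–Baxter equation (B × id)(id × B)(B × id) = (id × B)(B × id)(id × B). -/
import Mathlib


/-- `B × id` acting on the first two factors of `V × V × V`. -/
def ybLeft {X : Type*} (B : X × X → X × X) : X × X × X → X × X × X :=
  fun p => ((B (p.1, p.2.1)).1, (B (p.1, p.2.1)).2, p.2.2)

/-- `id × B` acting on the last two factors of `V × V × V`. -/
def ybRight {X : Type*} (B : X × X → X × X) : X × X × X → X × X × X :=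
  fun p => (p.1, (B (p.2.1, p.2.2)).1, (B (p.2.1, p.2.2)).2)

/-- a `(t,s,r)`-birack `B(x,y) = (t•y + s•x, r•x)` on a vector
space `V` over a field `F`, with `t, r ≠ 0` and `s² = (1 - t r) s`, satisfies
the set-theoretic Yang–Baxter equation. -/
theorem tsr_birack_yang_baxter (F V : Type*) [Field F] [AddCommGroup V] [Module F V]
    (t s r : F) (ht : t ≠ 0) (hr : r ≠ 0) (hs : s ^ 2 = (1 - t * r) * s)
    (B : V × V → V × V)
    (hB : ∀ x y : V, B (x, y) = (t • y + s • x, r • x)) :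
    ybLeft B ∘ ybRight B ∘ ybLeft B = ybRight B ∘ ybLeft B ∘ ybRight B := by

  funext p
  obtain ⟨x, y, z⟩ := p
  simp only [ybLeft, ybRight, Function.comp_apply, hB]
  refine Prod.ext ?_ (Prod.ext ?_ ?_) <;>
    simp only [smul_add, smul_smul] <;>
    match_scalars <;>
    ring_nf <;>
    linear_combination hs
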